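/- Let N, T ∈ ℕ, α ∈ (0,1), and let S₁, …, S_{N+1} be random functions from {1, …, T} to ℝ on a probability space whose joint distribution is invariant under every permutation of the N+1 indices (exchangeability). Fix deterministic functions μ : {1, …, T} → ℝ and s : {1, …, T} → ℝ with s(t) > 0 for all t, and define D_j := max_{t ∈ {1,…,T}} (S_j(t) − μ(t)) / s(t) for each j. Let k := ⌈(1−α)(N+1)⌉, suppose k ≤ N, and let h denote the k-th smallest value among D₁, …, D_N. Then P(S_{N+1}(t) ≤ μ(t) + h·s(t) for all t ∈ {1, …, T}) ≥ 1 − α. -/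

import Mathlib

/-!
Call `i` *low* at `ω` if fewer than `k` of the scores `D j ω` lie strictly below `D i ω`. The `k`
smallest scores are always low, so at least `k` of the `N + 1` indices are low at every `ω`, and by
exchangeability each index is low with the same probability; hence
`(N + 1) · P(last is low) ≥ k ≥ (1 - α)(N + 1)`. If the new rollout is low, fewer than `k`
calibration scores lie below its score, so that score is at most the `k`-th smallest calibration
score `h`; since `s > 0`, this is the band inequality at every time step.
-/

open MeasureTheory Finset

namespace List

variable {α : Type*}

theorem countP_ofFn {n : ℕ} (d : Fin n → α) (p : α → Prop) [DecidablePred p] :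
    (ofFn d).countP (p ·) = #{j | p (d j)} := by
  rw [← Multiset.coe_countP, ← Fin.univ_val_map, Multiset.countP_map]
  rfl

variable [LinearOrder α] {l : List α}

theorem SortedLE.countP_lt_getElem_le (hl : l.SortedLE) {i : ℕ} (hi : i < l.length) :
    l.countP (· < l[i]) ≤ i := by
  have hdrop : (l.drop i).countP (· < l[i]) = 0 := by
    refine countP_eq_zero.2 fun a ha => ?_
    obtain ⟨j, hj, rfl⟩ := mem_drop_iff_getElem.1 ha
    simpa using hl.getElem_le_getElem_of_le (Nat.le_add_right i j)
  have hsplit (p : α → Bool) : l.countP p = (l.take i).countP p + (l.drop i).countP p := by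
    rw [← countP_append, take_append_drop]
  calc l.countP (· < l[i]) = (l.take i).countP (· < l[i]) := by rw [hsplit, hdrop, add_zero]
    _ ≤ i := countP_le_length.trans (length_take_le _ _)

theorem SortedLE.lt_countP_le_getElem (hl : l.SortedLE) {i : ℕ} (hi : i < l.length) :
    i < l.countP (· ≤ l[i]) := by
  have htake : (l.take (i + 1)).countP (· ≤ l[i]) = i + 1 := by
    rw [countP_eq_length.2, length_take_of_le hi]
    intro a ha
    obtain ⟨j, hj, rfl⟩ := mem_take_iff_getElem.1 ha
    simpa using hl.getElem_le_getElem_of_le (by omega)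
  have hsub := (take_sublist (i + 1) l).countP_le (p := (· ≤ l[i]))
  omega

end List

namespace MeasureTheory

theorem mul_measure_univ_le_sum_measure {Ω ι : Type*} [MeasurableSpace Ω] {μ : Measure Ω}
    [Fintype ι] {A : ι → Set Ω} (hA : ∀ i, MeasurableSet (A i)) {k : ℕ}
    (hk : ∀ ω, ∃ s : Finset ι, k ≤ #s ∧ ∀ i ∈ s, ω ∈ A i) :
    k * μ Set.univ ≤ ∑ i, μ (A i) :=
  calc k * μ Set.univ = ∫⁻ _, (k : ENNReal) ∂μ := (lintegral_const _).symm
    _ ≤ ∫⁻ ω, ∑ i, (A i).indicator 1 ω ∂μ := lintegral_mono fun ω => by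
        obtain ⟨s, hks, hsA⟩ := hk ω
        calc (k : ENNReal) ≤ #s := by exact_mod_cast hks
          _ = ∑ i ∈ s, (A i).indicator 1 ω := by
            rw [card_eq_sum_ones, Nat.cast_sum]
            exact sum_congr rfl fun i hi => by simp [hsA i hi]
          _ ≤ ∑ i, (A i).indicator 1 ω := sum_le_sum_of_subset (subset_univ s)
    _ = ∑ i, μ (A i) := by
        rw [lintegral_finsetSum _ fun i _ => measurable_one.indicator (hA i)]
        simp only [lintegral_indicator_one (hA _)]

end MeasureTheory

theorem ENNReal.ofReal_le_of_natCeil_mul_le {a : ℝ} {m : ℕ} {x : ENNReal} (hm : m ≠ 0)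
    (h : (⌈a * m⌉₊ : ENNReal) ≤ m * x) : ENNReal.ofReal a ≤ x := by
  rw [← ENNReal.mul_le_mul_iff_right (Nat.cast_ne_zero.2 hm) (ENNReal.natCast_ne_top m)]
  refine le_trans ?_ h
  rw [← ENNReal.ofReal_natCast, ← ENNReal.ofReal_natCast,
    ← ENNReal.ofReal_mul (Nat.cast_nonneg m), mul_comm]
  exact ENNReal.ofReal_le_ofReal (Nat.le_ceil _)

namespace Conformal

section Order

variable {α : Type*} [LinearOrder α] {n k : ℕ}

/-- The `k`-th smallest entry of `d`, counted from `k = 1`; `x₀` is a junk value returned when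
`k = 0` or `n < k`. -/
def kthSmallest (d : Fin n → α) (k : ℕ) (x₀ : α) : α :=
  ((List.ofFn d).mergeSort (· ≤ ·)).getD (k - 1) x₀

section kthSmallest

variable (d : Fin n → α) (x₀ : α)

theorem kthSmallest_eq_getElem (hk₀ : 0 < k) (hkn : k ≤ n) :
    kthSmallest d k x₀ = ((List.ofFn d).mergeSort (· ≤ ·))[k - 1]'(by
      rw [List.length_mergeSort, List.length_ofFn]; omega) :=
  List.getD_eq_getElem _ _ _

theorem card_lt_kthSmallest_lt (hk₀ : 0 < k) (hkn : k ≤ n) :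
    #{j | d j < kthSmallest d k x₀} < k := by
  rw [← List.countP_ofFn d (· < kthSmallest d k x₀), ← (List.mergeSort_perm _ _).countP_eq,
    kthSmallest_eq_getElem d x₀ hk₀ hkn]
  exact (List.sortedLE_mergeSort.countP_lt_getElem_le _).trans_lt (by omega)

theorem le_card_le_kthSmallest (hkn : k ≤ n) : k ≤ #{j | d j ≤ kthSmallest d k x₀} := by
  obtain rfl | hk₀ := Nat.eq_zero_or_pos k
  · exact Nat.zero_le _
  rw [← List.countP_ofFn d (· ≤ kthSmallest d k x₀), ← (List.mergeSort_perm _ _).countP_eq,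
    kthSmallest_eq_getElem d x₀ hk₀ hkn]
  exact Nat.le_of_pred_lt (List.sortedLE_mergeSort.lt_countP_le_getElem _)

theorem le_kthSmallest_of_card_lt (hkn : k ≤ n) {x : α} (hx : #{j | d j < x} < k) :
    x ≤ kthSmallest d k x₀ := by
  by_contra! hlt
  have hsub : #{j | d j ≤ kthSmallest d k x₀} ≤ #{j | d j < x} :=
    card_le_card fun j hj => by
      simp only [mem_filter, mem_univ, true_and] at hj ⊢
      exact hj.trans_lt hlt
  exact (le_card_le_kthSmallest d x₀ hkn |>.trans hsub).not_gt hx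

end kthSmallest

def rank {ι : Type*} [Fintype ι] (x : ι → α) (i : ι) : ℕ := #{j | x j < x i}

theorem rank_comp_perm {ι : Type*} [Fintype ι] (x : ι → α) (σ : Equiv.Perm ι) (i : ι) :
    rank (x ∘ σ) i = rank x (σ i) :=
  card_equiv σ fun j => by simp

theorem le_card_rank_lt (x : Fin n → α) (hkn : k ≤ n) : k ≤ #{i | rank x i < k} := by
  obtain rfl | hk₀ := Nat.eq_zero_or_pos k
  · exact Nat.zero_le _
  set x₀ := x ⟨0, by omega⟩
  refine (le_card_le_kthSmallest x x₀ hkn).trans (card_le_card fun i hi => ?_)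
  simp only [mem_filter, mem_univ, true_and] at hi ⊢
  calc rank x i ≤ #{j | x j < kthSmallest x k x₀} :=
        card_le_card fun j hj => by
          simp only [mem_filter, mem_univ, true_and] at hj ⊢
          exact hj.trans_le hi
    _ < k := card_lt_kthSmallest_lt x _ hk₀ hkn

theorem le_kthSmallest_init_of_rank_last_lt (x : Fin (n + 1) → α) (x₀ : α) (hkn : k ≤ n)
    (hx : rank x (Fin.last n) < k) : x (Fin.last n) ≤ kthSmallest (Fin.init x) k x₀ := by
  refine le_kthSmallest_of_card_lt _ x₀ hkn (lt_of_le_of_lt ?_ hx)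
  refine card_le_card_of_injOn Fin.castSucc (fun i hi => ?_) (Fin.castSucc_injective n).injOn
  rw [mem_coe, mem_filter] at hi ⊢
  exact ⟨mem_univ _, hi.2⟩

end Order

section Exchangeable

variable {Ω ι β : Type*} [MeasurableSpace Ω] [MeasurableSpace β] {μ : Measure Ω}

def Exchangeable (μ : Measure Ω) (X : ι → Ω → β) : Prop :=
  ∀ σ : Equiv.Perm ι, μ.map (fun ω i => X (σ i) ω) = μ.map (fun ω i => X i ω)

theorem Exchangeable.comp {γ : Type*} [MeasurableSpace γ] {X : ι → Ω → β}
    (hX : Exchangeable μ X) (hXm : ∀ i, Measurable (X i)) {f : β → γ} (hf : Measurable f) :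
    Exchangeable μ fun i ω => f (X i ω) := by
  intro σ
  have hmap (τ : ι → ι) : μ.map (fun ω i => f (X (τ i) ω))
      = (μ.map fun ω i => X (τ i) ω).map fun x i => f (x i) :=
    (Measure.map_map (measurable_pi_lambda _ fun i => hf.comp (measurable_pi_apply i))
      (measurable_pi_lambda _ fun i => hXm (τ i))).symm
  exact (hmap σ).trans ((congrArg _ (hX σ)).trans (hmap id).symm)

theorem measurableSet_rank_lt [Fintype ι] (i : ι) (k : ℕ) :
    MeasurableSet {x : ι → ℝ | rank x i < k} := by
  have hm : Measurable fun x : ι → ℝ => rank x i := by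
    simp only [rank, card_filter]
    exact Finset.measurable_sum _ fun j _ => Measurable.ite
      (measurableSet_lt (measurable_pi_apply j) (measurable_pi_apply i))
      measurable_const measurable_const
  exact hm measurableSet_Iio

theorem Exchangeable.measure_rank_lt_eq [Fintype ι] [DecidableEq ι] {X : ι → Ω → ℝ}
    (hX : Exchangeable μ X) (hXm : ∀ i, Measurable (X i)) (i j : ι) (k : ℕ) :
    μ {ω | rank (X · ω) i < k} = μ {ω | rank (X · ω) j < k} := by
  have hpre : {ω | rank (X · ω) j < k}
      = (fun ω l => X (Equiv.swap i j l) ω) ⁻¹' {x | rank x i < k} := by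
    ext ω
    change _ < k ↔ rank ((X · ω) ∘ Equiv.swap i j) i < k
    rw [rank_comp_perm, Equiv.swap_apply_left]
  rw [hpre,
    ← Measure.map_apply (measurable_pi_lambda _ fun l => hXm _) (measurableSet_rank_lt i k), hX,
    Measure.map_apply (measurable_pi_lambda _ hXm) (measurableSet_rank_lt i k)]
  rfl

theorem Exchangeable.le_card_mul_measure_rank_lt {X : Fin n → Ω → ℝ} (hX : Exchangeable μ X)
    (hXm : ∀ i, Measurable (X i)) (hkn : k ≤ n) (i : Fin n) :
    k * μ Set.univ ≤ n * μ {ω | rank (X · ω) i < k} :=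
  calc k * μ Set.univ ≤ ∑ j, μ {ω | rank (X · ω) j < k} :=
        mul_measure_univ_le_sum_measure
          (fun j => measurableSet_rank_lt j k |>.preimage (measurable_pi_lambda _ hXm))
          fun ω => ⟨_, le_card_rank_lt (X · ω) hkn, fun j hj => by simpa using hj⟩
    _ = n * μ {ω | rank (X · ω) i < k} := by
        simp [hX.measure_rank_lt_eq hXm _ i]

end Exchangeable

end Conformal

open Conformal

theorem functional_conformal_band_coverage_general
    {Ω : Type*} {mΩ : MeasurableSpace Ω} (μ : Measure Ω) [IsProbabilityMeasure μ]
    (N T : ℕ) (hT : 0 < T) (α : ℝ)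
    (S : Fin (N + 1) → Ω → Fin T → ℝ) (hS : ∀ i, Measurable (S i))
    (hexch : ∀ σ : Equiv.Perm (Fin (N + 1)),
      Measure.map (fun ω (i : Fin (N + 1)) => S (σ i) ω) μ
        = Measure.map (fun ω (i : Fin (N + 1)) => S i ω) μ)
    (μf s : Fin T → ℝ) (hs : ∀ t, 0 < s t)
    (D : Fin (N + 1) → Ω → ℝ)
    (hD : ∀ j ω, D j ω =
      Finset.univ.sup' ⟨(⟨0, hT⟩ : Fin T), Finset.mem_univ _⟩
        (fun t : Fin T => (S j ω t - μf t) / s t))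
    (k : ℕ) (hk : k = ⌈(1 - α) * (N + 1 : ℝ)⌉₊) (hkN : k ≤ N)
    (h : Ω → ℝ)
    (hh : ∀ ω, h ω =
      (((List.ofFn fun i : Fin N => D i.castSucc ω).mergeSort (· ≤ ·)).getD (k - 1) 0)) :
    ENNReal.ofReal (1 - α)
      ≤ μ {ω | ∀ t : Fin T, S (Fin.last N) ω t ≤ μf t + h ω * s t} := by
  have hDm : ∀ j, Measurable (D j) := fun j => by
    rw [funext (hD j)]
    fun_prop
  have hDexch : Exchangeable μ D := by
    have hG : Measurable fun v : Fin T → ℝ =>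
        univ.sup' ⟨⟨0, hT⟩, mem_univ _⟩ fun t => (v t - μf t) / s t := by fun_prop
    convert (show Exchangeable μ S from hexch).comp hS hG using 3
    exact hD _ _
  have hcover : {ω | rank (D · ω) (Fin.last N) < k}
      ⊆ {ω | ∀ t : Fin T, S (Fin.last N) ω t ≤ μf t + h ω * s t} := fun ω hω t => by
    have hDh : D (Fin.last N) ω ≤ h ω :=
      (hh ω).symm ▸ le_kthSmallest_init_of_rank_last_lt (D · ω) 0 hkN hω
    have hSt : (S (Fin.last N) ω t - μf t) / s t ≤ D (Fin.last N) ω := by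
      rw [hD]
      exact le_sup' (fun t => (S (Fin.last N) ω t - μf t) / s t) (mem_univ t)
    have hband := (div_le_iff₀ (hs t)).1 (hSt.trans hDh)
    linarith
  have hrank := hDexch.le_card_mul_measure_rank_lt hDm (Nat.le_succ_of_le hkN) (Fin.last N)
  rw [measure_univ, mul_one] at hrank
  refine (ENNReal.ofReal_le_of_natCeil_mul_le (Nat.succ_ne_zero N) ?_).trans (measure_mono hcover)
  push_cast
  rw [← hk]
  exact_mod_cast hrank

/-- Functional conformal prediction band guarantee: given exchangeable score
trajectories `S 0, …, S N : Ω → (Fin T → ℝ)` (the first `N` being calibration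
rollouts, the last the new rollout), a mean trajectory `μf`, a positive
modulation function `s`, the maximal modulated deviations
`D j = max_t (S j t - μf t) / s t`, `k = ⌈(1-α)(N+1)⌉ ≤ N`, and `h` the `k`-th
smallest of the calibration deviations `D 1, …, D N`, the band
`t ↦ μf t + h * s t` contains the new trajectory at all times simultaneously
with probability at least `1 - α`. -/
theorem functional_conformal_band_coverage
    {Ω : Type*} {mΩ : MeasurableSpace Ω} (μ : Measure Ω) [IsProbabilityMeasure μ]
    (N T : ℕ) (hT : 0 < T) (α : ℝ) (hα : α ∈ Set.Ioo (0 : ℝ) 1)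
    (S : Fin (N + 1) → Ω → Fin T → ℝ) (hS : ∀ i, Measurable (S i))
    (hexch : ∀ σ : Equiv.Perm (Fin (N + 1)),
      Measure.map (fun ω (i : Fin (N + 1)) => S (σ i) ω) μ
        = Measure.map (fun ω (i : Fin (N + 1)) => S i ω) μ)
    (μf s : Fin T → ℝ) (hs : ∀ t, 0 < s t)
    (D : Fin (N + 1) → Ω → ℝ)
    (hD : ∀ j ω, D j ω =
      Finset.univ.sup' ⟨(⟨0, hT⟩ : Fin T), Finset.mem_univ _⟩
        (fun t : Fin T => (S j ω t - μf t) / s t))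
    (k : ℕ) (hk : k = ⌈(1 - α) * (N + 1 : ℝ)⌉₊) (hkN : k ≤ N)
    (h : Ω → ℝ)
    (hh : ∀ ω, h ω =
      (((List.ofFn fun i : Fin N => D i.castSucc ω).mergeSort (· ≤ ·)).getD (k - 1) 0)) :
    ENNReal.ofReal (1 - α)
      ≤ μ {ω | ∀ t : Fin T, S (Fin.last N) ω t ≤ μf t + h ω * s t} :=
  functional_conformal_band_coverage_general (mΩ := mΩ) μ N T hT α S hS hexch μf s hs D hD k hk hkN
    h hh
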